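/- Let x₀ = √(-2α²·ln(y/(2w))) and suppose 0 < x < x₀. Then for every β > 0 the quantity -[2·ln(y/(2w)) + (1/α²)·(xβ/(β + y²/(4α²)))²] is strictly positive; i.e., σ_f = -y/2 is a local minimum of the dual function for all β > 0. -/

import Mathlib

/-! The derivative of the dual factors as `(σ + y/2) · c(σ)`: substituting
`dualF = x (G - β)` with `G = dualG`, the `x²`-terms collapse to `x²β² / (2α²G²)`, so
`c(σ) = -(2 log((σ + y)/w) + (xβ/G)²/α²)` (the terms `±σ` from the logarithm cancel). Since `c` is
continuous at `-y/2`, the first-derivative test makes `-y/2` a local minimum as soon as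
`c(-y/2) > 0`, and `c(-y/2)` is the displayed quantity. It is positive because `0 < β ≤ G(-y/2)`
damps `(xβ/G)²` below `x² < -2α² log(y/(2w))`. -/

noncomputable def dualG (y α β σ : ℝ) : ℝ := β - (σ^2 + y * σ) / α^2

noncomputable def dualF (x y α σ : ℝ) : ℝ := -x * (σ^2 + y * σ) / α^2

noncomputable def dualPd (w x y α β σ : ℝ) : ℝ :=
  -(1/2) * (dualF x y α σ)^2 / (dualG y α β σ)
    - Real.log ((σ + y) / w) * (σ^2 + y * σ)
    + (1/2) * σ^2 - x^2 * (σ^2 + y * σ) / (2 * α^2)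

open Filter Topology

theorem isLocalMin_of_hasDerivAt_sub_mul {f g : ℝ → ℝ} {c : ℝ}
    (hf : ∀ᶠ x in 𝓝 c, HasDerivAt f ((x - c) * g x) x) (hg : ContinuousAt g c) (hc : 0 < g c) :
    IsLocalMin f c := by
  have hfg := hf.and (hg.eventually (lt_mem_nhds hc))
  refine isLocalMin_of_deriv' hf.self_of_nhds.continuousAt
    (nhdsWithin_le_nhds (hf.mono fun x h => h.differentiableAt))
    (nhdsWithin_le_nhds (hf.mono fun x h => h.differentiableAt)) ?_ ?_
  · filter_upwards [nhdsWithin_le_nhds hfg, self_mem_nhdsWithin] with x ⟨hd, hgx⟩ (hx : x < c)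
    rw [hd.deriv]
    exact mul_nonpos_of_nonpos_of_nonneg (by linarith) hgx.le
  · filter_upwards [nhdsWithin_le_nhds hfg, self_mem_nhdsWithin] with x ⟨hd, hgx⟩ (hx : c < x)
    rw [hd.deriv]
    exact mul_nonneg (by linarith) hgx.le

theorem sq_mul_div_le_sq {x β G : ℝ} (hβ : 0 ≤ β) (hβG : β ≤ G) : (x * β / G) ^ 2 ≤ x ^ 2 := by
  have h₀ : 0 ≤ β / G := div_nonneg hβ (hβ.trans hβG)
  have h₁ : β / G ≤ 1 := div_le_one_of_le₀ hβG (hβ.trans hβG)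
  calc (x * β / G) ^ 2 = x ^ 2 * (β / G) ^ 2 := by ring
    _ ≤ x ^ 2 * 1 := by gcongr; exact pow_le_one₀ h₀ h₁
    _ = x ^ 2 := mul_one _

noncomputable def dualPdCurvature (w x y α β σ : ℝ) : ℝ :=
  -(2 * Real.log ((σ + y) / w) + (1 / α^2) * (x * β / dualG y α β σ)^2)

section
variable {w x y α β σ : ℝ}

theorem continuous_dualG : Continuous (dualG y α β) := by
  unfold dualG; fun_prop

theorem hasDerivAt_dualPd (hw : w ≠ 0) (hσ : σ + y ≠ 0) (hG : dualG y α β σ ≠ 0) :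
    HasDerivAt (dualPd w x y α β) ((σ + y / 2) * dualPdCurvature w x y α β σ) σ := by
  have hq : HasDerivAt (fun s => s^2 + y * s) (2 * σ + y) σ := by
    refine ((hasDerivAt_pow 2 σ).add ((hasDerivAt_id' σ).const_mul y)).congr_deriv ?_
    ring
  have hF : HasDerivAt (dualF x y α) (-x * (2 * σ + y) / α^2) σ :=
    (hq.const_mul (-x)).div_const _
  have hG' : HasDerivAt (dualG y α β) (-((2 * σ + y) / α^2)) σ :=
    (hq.div_const _).const_sub β
  have hL : HasDerivAt (fun s => Real.log ((s + y) / w)) (1 / w / ((σ + y) / w)) σ :=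
    (((hasDerivAt_id σ).add_const y).div_const w).log (div_ne_zero hσ hw)
  refine (((((hF.pow 2).const_mul (-(1/2))).div hG' hG).sub (hL.mul hq)).add
    ((hasDerivAt_pow 2 σ).const_mul (1/2)) |>.sub
      ((hq.const_mul (x^2)).div_const (2 * α^2))).congr_deriv ?_
  have hFG : dualF x y α σ = x * (dualG y α β σ - β) := by simp only [dualF, dualG]; ring
  simp only [dualPdCurvature, Pi.pow_apply, hFG]
  field_simp
  ring

theorem continuousAt_dualPdCurvature (hw : w ≠ 0) (hσ : σ + y ≠ 0) (hG : dualG y α β σ ≠ 0) :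
    ContinuousAt (dualPdCurvature w x y α β) σ := by
  have hG' : ContinuousAt (dualG y α β) σ := continuous_dualG.continuousAt
  have hlog : (σ + y) / w ≠ 0 := div_ne_zero hσ hw
  unfold dualPdCurvature
  fun_prop (disch := assumption)

theorem dualG_neg_half : dualG y α β (-y / 2) = β + y ^ 2 / (4 * α ^ 2) := by
  unfold dualG; ring

theorem dualPdCurvature_neg_half :
    dualPdCurvature w x y α β (-y / 2) =
      -(2 * Real.log (y / (2 * w)) + (1 / α^2) * (x * β / (β + y^2 / (4 * α^2)))^2) := by
  rw [dualPdCurvature, dualG_neg_half]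
  ring_nf

theorem dualPdCurvature_neg_half_pos (hα : α ≠ 0) (hx : 0 ≤ x) (hβ : 0 ≤ β)
    (hxo : x < Real.sqrt (-2 * α^2 * Real.log (y / (2 * w)))) :
    0 < dualPdCurvature w x y α β (-y / 2) := by
  have hα2 : 0 < α ^ 2 := by positivity
  have hx2 : x ^ 2 < -2 * α ^ 2 * Real.log (y / (2 * w)) := (Real.lt_sqrt hx).1 hxo
  have hdamp : (x * β / (β + y ^ 2 / (4 * α ^ 2))) ^ 2 ≤ x ^ 2 :=
    sq_mul_div_le_sq hβ (le_add_of_nonneg_right (by positivity))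
  have hlt :
      (1 / α ^ 2) * (x * β / (β + y ^ 2 / (4 * α ^ 2))) ^ 2 < -2 * Real.log (y / (2 * w)) := by
    rw [one_div_mul_eq_div, div_lt_iff₀ hα2]
    linarith
  rw [dualPdCurvature_neg_half]
  linarith

end

theorem pseudo_point_local_min_small_x_general
    (w x y α : ℝ) (hw : 0 < w) (hy : 0 < y) (hα : α ≠ 0)
    (hx : 0 < x) (hxo : x < Real.sqrt (-2 * α^2 * Real.log (y / (2 * w)))) :
    ∀ β : ℝ, 0 < β →
      0 < -(2 * Real.log (y / (2 * w)) +
          (1 / α^2) * (x * β / (β + y^2 / (4 * α^2)))^2) ∧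
      IsLocalMin (fun σ => dualPd w x y α β σ) (-y / 2) := by
  intro β hβ
  have hcurv := dualPdCurvature_neg_half_pos hα hx.le hβ.le hxo
  refine ⟨dualPdCurvature_neg_half ▸ hcurv, ?_⟩
  have hσ : -y / 2 + y ≠ 0 := by linarith
  have hG : dualG y α β (-y / 2) ≠ 0 := by rw [dualG_neg_half]; positivity
  have hσ_near : ∀ᶠ σ in 𝓝 (-y / 2), σ + y ≠ 0 :=
    (continuousAt_id.add continuousAt_const).eventually_ne hσ
  have hG_near : ∀ᶠ σ in 𝓝 (-y / 2), dualG y α β σ ≠ 0 :=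
    continuous_dualG.continuousAt.eventually_ne hG
  refine isLocalMin_of_hasDerivAt_sub_mul ?_ (continuousAt_dualPdCurvature hw.ne' hσ hG) hcurv
  filter_upwards [hσ_near, hG_near] with σ hσ hG
  convert hasDerivAt_dualPd hw.ne' hσ hG using 2
  ring

/-- If 0 < x < x₀ = √(-2α²ln(y/(2w))), then for every β > 0 the quantity
(P^d)''(-y/2) = -[2ln(y/(2w)) + (1/α²)(xβ/(β+y²/(4α²)))²] is strictly positive,
and σ_f = -y/2 is a local minimum of the dual for all β > 0. -/
theorem pseudo_point_local_min_small_x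
    (w x y α : ℝ) (hw : 0 < w) (hy : 0 < y) (hyw : y < 2 * w) (hα : α ≠ 0)
    (hx : 0 < x) (hxo : x < Real.sqrt (-2 * α^2 * Real.log (y / (2 * w)))) :
    ∀ β : ℝ, 0 < β →
      0 < -(2 * Real.log (y / (2 * w)) +
          (1 / α^2) * (x * β / (β + y^2 / (4 * α^2)))^2) ∧
      IsLocalMin (fun σ => dualPd w x y α β σ) (-y / 2) :=
  pseudo_point_local_min_small_x_general w x y α hw hy hα hx hxo
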